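/- If the two step ratios are equal, τ' = τ, and 0 < τ ≤ 1.0315, then β₃ − β₂ − β₁ > 0. (This is the coefficient positivity of the discrete time-derivative term used in the stability and error estimates of the variable-step BDF2-TF algorithm for step ratios 0 < τₙ ≤ 1.0315.) -/

import Mathlib

/-!
For equal step ratios the three coefficients share the denominator `(1 + τ)(1 + τ(1 + τ))`,
and `β₃ − β₂ − β₁` becomes `p(τ) / ((1 + τ)(1 + τ(1 + τ)))` with the sextic
`p(τ) = (1 + τ)³ − τ⁴(τ² + 2τ + 3)`. By Descartes' rule its only positive root is `τ ≈ 1.0954`,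
so `p` is positive on `[0, 1.09]`, which contains `(0, 1.0315]`.
-/

/-- BDF2-TF β-coefficients. -/
noncomputable def beta3 (τ τ' : ℝ) : ℝ :=
  1 + τ / (1 + τ) + τ * τ' / (1 + τ' * (1 + τ))
noncomputable def beta2 (τ τ' : ℝ) : ℝ :=
  τ ^ 2 / (1 + τ) + τ ^ 2 * τ' * (1 + τ' * (2 + τ)) / ((1 + τ') * (1 + τ' * (1 + τ)))
noncomputable def beta1 (τ τ' : ℝ) : ℝ :=
  τ ^ 2 * τ' ^ 3 * (1 + τ) / ((1 + τ') * (1 + τ' * (1 + τ)))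

def bdf2tfNumerator (τ : ℝ) : ℝ :=
  (1 + τ) ^ 3 - τ ^ 4 * (τ ^ 2 + 2 * τ + 3)

lemma one_add_mul_one_add_pos (τ : ℝ) : 0 < 1 + τ * (1 + τ) := by
  nlinarith [sq_nonneg (τ + 1 / 2)]

lemma beta3_sub_beta2_sub_beta1_self {τ : ℝ} (hτ : 1 + τ ≠ 0) :
    beta3 τ τ - beta2 τ τ - beta1 τ τ =
      bdf2tfNumerator τ / ((1 + τ) * (1 + τ * (1 + τ))) := by
  have hq := (one_add_mul_one_add_pos τ).ne'
  unfold beta3 beta2 beta1 bdf2tfNumerator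
  field_simp
  ring

lemma bdf2tfNumerator_pos {τ : ℝ} (h0 : 0 ≤ τ) (h1 : τ ≤ 1.09) : 0 < bdf2tfNumerator τ := by
  unfold bdf2tfNumerator
  nlinarith [pow_le_pow_left₀ h0 h1 4, pow_nonneg h0 4, pow_nonneg h0 3]

/-- For equal step ratios `τ' = τ` with `0 < τ ≤ 1.0315`, the coefficient
`β₃ − β₂ − β₁` of the discrete time-derivative term is strictly positive. -/
theorem bdf2tf_time_derivative_coefficient_positive
    (τ τ' : ℝ) (heq : τ' = τ) (h0 : 0 < τ) (h1 : τ ≤ 1.0315) :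
    0 < beta3 τ τ' - beta2 τ τ' - beta1 τ τ' := by
  subst heq
  rw [beta3_sub_beta2_sub_beta1_self (by positivity)]
  exact div_pos (bdf2tfNumerator_pos h0.le (by linarith))
    (mul_pos (by positivity) (one_add_mul_one_add_pos τ'))
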